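/- arXiv:1101.0410 — 2 statements merged into one kernel-verified Lean document; each statement's English description precedes it below -/
import Mathlib

section
/- Let n ≥ 2, let F be an affine subspace of ℝ^n whose direction has dimension n - 2, and let S be a subset of {0,1}^n ⊆ (Fin n → ℝ) with more than 2^(n-3) elements such that S ⊆ F. Then affineSpan ℝ S = F. -/
/-!
A set of cube vertices whose affine span has dimension `d` has at most `2 ^ d` elements: if two of
its points differ in coordinate `i`, the points with `x i = 0` and those with `x i = 1` each span a
flat inside the hyperplane section `x i = const` of the span, hence of dimension at most `d - 1`.
So more than `2 ^ (n - 3)` vertices inside an `(n - 2)`-flat `F` span a flat of dimension `n - 2`,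
which is then all of `F`.
-/

open Module

variable {k ι : Type*}

theorem vectorSpan_le_ker_proj [Ring k] {S : Set (ι → k)} {i : ι} {c : k}
    (h : ∀ x ∈ S, x i = c) : vectorSpan k S ≤ LinearMap.ker (LinearMap.proj i) := by
  rw [vectorSpan_def, Submodule.span_le]
  rintro _ ⟨x, hx, y, hy, rfl⟩
  simp [h x hx, h y hy]

theorem finrank_vectorSpan_sep_lt [DivisionRing k] [Finite ι] {S : Set (ι → k)} {x y : ι → k}
    (hx : x ∈ S) (hy : y ∈ S) {i : ι} (hxy : x i ≠ y i) (c : k) :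
    finrank k (vectorSpan k {z ∈ S | z i = c}) < finrank k (vectorSpan k S) := by
  have hsection : vectorSpan k {z ∈ S | z i = c} ≤
      vectorSpan k S ⊓ LinearMap.ker (LinearMap.proj i) :=
    le_inf (vectorSpan_mono k (Set.sep_subset S _)) (vectorSpan_le_ker_proj fun z hz => hz.2)
  have hproper : vectorSpan k S ⊓ LinearMap.ker (LinearMap.proj i) < vectorSpan k S := by
    refine inf_lt_left.2 fun hle => hxy ?_
    simpa [sub_eq_zero] using hle (vsub_mem_vectorSpan k hx hy)
  exact Submodule.finrank_lt_finrank_of_lt (hsection.trans_lt hproper)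

theorem ncard_le_two_pow_finrank_vectorSpan [DivisionRing k] [Finite ι] {S : Set (ι → k)}
    (hS : ∀ x ∈ S, ∀ i, x i = 0 ∨ x i = 1) : S.ncard ≤ 2 ^ finrank k (vectorSpan k S) := by
  induction h : finrank k (vectorSpan k S) using Nat.strong_induction_on generalizing S with
  | _ d IH =>
  rcases S.subsingleton_or_nontrivial with hsub | ⟨x, hx, y, hy, hne⟩
  · rcases hsub.eq_empty_or_singleton with rfl | ⟨x, rfl⟩ <;> simp [Nat.one_le_two_pow]
  obtain ⟨i, hi⟩ := Function.ne_iff.1 hne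
  have hd : 0 < d := h ▸ (finrank_vectorSpan_sep_lt hx hy hi 0).trans_le' (Nat.zero_le _)
  have hpart (c : k) : {z ∈ S | z i = c}.ncard ≤ 2 ^ (d - 1) := by
    have hlt := h ▸ finrank_vectorSpan_sep_lt hx hy hi c
    exact (IH _ hlt (fun z hz => hS z hz.1) rfl).trans (Nat.pow_le_pow_right two_pos (by omega))
  have hsplit : S = {z ∈ S | z i = 0} ∪ {z ∈ S | z i = 1} := by
    rw [← Set.sep_or, Set.sep_eq_self_iff_mem_true.2 fun z hz => hS z hz i]
  calc S.ncard ≤ 2 ^ (d - 1) + 2 ^ (d - 1) :=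
        hsplit ▸ (Set.ncard_union_le _ _).trans (add_le_add (hpart 0) (hpart 1))
    _ = 2 ^ d := by rw [← two_mul, ← pow_succ', Nat.sub_add_cancel hd]

theorem stmt4_general (n : ℕ) (F : AffineSubspace ℝ (Fin n → ℝ))
    (hF : Module.finrank ℝ F.direction = n - 2)
    (S : Set (Fin n → ℝ)) (hS : ∀ x ∈ S, ∀ i, x i = 0 ∨ x i = 1)
    (hSF : S ⊆ (F : Set (Fin n → ℝ)))
    (hcard : 2 ^ (n - 3) < S.ncard) :
    affineSpan ℝ S = F := by
  have hle : affineSpan ℝ S ≤ F := affineSpan_le.2 hSF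
  have hdir_le : vectorSpan ℝ S ≤ F.direction :=
    direction_affineSpan ℝ S ▸ AffineSubspace.direction_le hle
  have hrank : n - 2 ≤ finrank ℝ (vectorSpan ℝ S) := by
    by_contra! hlt
    have hbound := (ncard_le_two_pow_finrank_vectorSpan hS).trans
      (Nat.pow_le_pow_right two_pos (show finrank ℝ (vectorSpan ℝ S) ≤ n - 3 by omega))
    omega
  refine AffineSubspace.eq_of_direction_eq_of_nonempty_of_le ?_ ?_ hle
  · rw [direction_affineSpan]
    exact Submodule.eq_of_le_of_finrank_le hdir_le (hF ▸ hrank)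
  · exact (affineSpan_nonempty ℝ).2 <|
      Set.nonempty_of_ncard_ne_zero ((Nat.zero_le _).trans_lt hcard).ne'

/-- A set of more than `2^(n-3)` vertices of the hypercube contained in an
`(n-2)`-dimensional affine subspace `F` has affine span equal to `F`. -/
theorem stmt4 (n : ℕ) (hn : 2 ≤ n) (F : AffineSubspace ℝ (Fin n → ℝ))
    (hF : Module.finrank ℝ F.direction = n - 2)
    (S : Set (Fin n → ℝ)) (hS : ∀ x ∈ S, ∀ i, x i = 0 ∨ x i = 1)
    (hSF : S ⊆ (F : Set (Fin n → ℝ)))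
    (hcard : 2 ^ (n - 3) < S.ncard) :
    affineSpan ℝ S = F :=
  stmt4_general n F hF S hS hSF hcard
end

section
/- Let n ≥ 1 and t with 1 ≤ t ≤ n. Let a : Fin n → ℝ satisfy a i > 0 for (i : ℕ) < t and a i = 0 for (i : ℕ) ≥ t, and let b : ℝ. Let H = {x : Fin n → ℝ | ∑ i, a i * x i = b}, and assume the affine span over ℝ of {0,1}^n ∩ H has direction of dimension n - 1. Let δ = 1 if ∑ i, a i = 2 * b and δ = 0 otherwise. Then the number of pairs (π, ε), with π a permutation of Fin n and ε : Fin n → Bool, such that the map f_{π,ε} (defined by (f_{π,ε} x) i = x(π i) if ε i = false, and 1 - x(π i) if ε i = true) maps H onto H, equals (n-t)! * 2^(n - t + δ) * ∏_{v ∈ image of a on {i : (i:ℕ) < t}} (m_v)!, where m_v is the number of indices i with (i : ℕ) < t and a i = v. -/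
/-!
A signed permutation `f_{π,ε}` is an affine bijection of `ℝⁿ`, so it maps `H : a ⬝ᵥ x = b` onto
itself iff it pulls the equation of `H` back to a nonzero multiple of itself. The pulled-back
equation has the coefficient `±aᵢ` at `π i`; since `a ≥ 0` and the coefficients are permuted, the
multiple is `±1`. Hence `π` preserves `a`, and `ε` is constant on the support `{i | i < t}` of `a`,
the value `true` (reflecting every coordinate of the support) being possible only when
`∑ aᵢ = 2b`. The count is then the order of the stabiliser of `a` in the symmetric group times
the number of such sign vectors, free off the support.
-/

open Classical Finset Nat

theorem Equiv.image_eq_self_iff_preimage_eq_self {α : Type*} (e : α ≃ α) (s : Set α) :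
    e '' s = s ↔ e ⁻¹' s = s := by
  constructor <;> intro h
  · conv_lhs => rw [← h]
    exact e.injective.preimage_image s
  · conv_lhs => rw [← h]
    exact e.surjective.image_preimage s

section

variable {ι : Type*} [Fintype ι]

theorem exists_eq_smul_of_forall_dotProduct_eq_imp [DecidableEq ι] {a c : ι → ℝ} {b d : ℝ}
    (ha : a ≠ 0) (h : ∀ x, a ⬝ᵥ x = b → c ⬝ᵥ x = d) :
    ∃ l : ℝ, c = l • a ∧ d = l * b := by
  obtain ⟨i₀, hi₀ : a i₀ ≠ 0⟩ := Function.ne_iff.1 ha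
  set x₀ : ι → ℝ := Pi.single i₀ (b / a i₀)
  have hx₀ : a ⬝ᵥ x₀ = b := by rw [dotProduct_single, mul_div_cancel₀ _ hi₀]
  have hker : ∀ v, a ⬝ᵥ v = 0 → c ⬝ᵥ v = 0 := fun v hv => by
    have := h (x₀ + v) (by rw [dotProduct_add, hx₀, hv, add_zero])
    rwa [dotProduct_add, h x₀ hx₀, add_eq_left] at this
  refine ⟨c i₀ / a i₀, funext fun j => ?_, ?_⟩
  · have := hker (a i₀ • Pi.single j 1 - a j • Pi.single i₀ 1) (by
      simp only [dotProduct_sub, dotProduct_smul, dotProduct_single, smul_eq_mul]; ring)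
    simp only [dotProduct_sub, dotProduct_smul, dotProduct_single, smul_eq_mul] at this
    rw [Pi.smul_apply, smul_eq_mul, div_mul_eq_mul_div, eq_div_iff hi₀]
    linarith
  · rw [← h x₀ hx₀, dotProduct_single]
    ring

/-- The symmetry `f_{π,ε}` of the cube. -/
def signedPerm (π : Equiv.Perm ι) (ε : ι → Bool) : Equiv.Perm (ι → ℝ) where
  toFun x i := if ε i then 1 - x (π i) else x (π i)
  invFun y j := if ε (π.symm j) then 1 - y (π.symm j) else y (π.symm j)
  left_inv x := by funext j; by_cases h : ε (π.symm j) <;> simp [h]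
  right_inv y := by funext i; by_cases h : ε i <;> simp [h]

theorem dotProduct_signedPerm (a : ι → ℝ) (π : Equiv.Perm ι) (ε : ι → Bool) (x : ι → ℝ) :
    a ⬝ᵥ signedPerm π ε x =
      (∑ i, if ε i then a i else 0) + ∑ i, (if ε i then -a i else a i) * x (π i) := by
  rw [← sum_add_distrib]
  refine sum_congr rfl fun i _ => ?_
  simp only [signedPerm, Equiv.coe_fn_mk]
  split_ifs <;> ring

variable {a : ι → ℝ} {π : Equiv.Perm ι} {ε : ι → Bool}

theorem dotProduct_signedPerm_of_comp_eq (hπ : a ∘ π = a) {s : Bool}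
    (hs : ∀ i, a i ≠ 0 → ε i = s) (x : ι → ℝ) :
    a ⬝ᵥ signedPerm π ε x = if s then ∑ i, a i - a ⬝ᵥ x else a ⬝ᵥ x := by
  have key : ∀ i, a i * signedPerm π ε x i =
      (fun j => if s then a j - a j * x j else a j * x j) (π i) := fun i => by
    have hai : a (π i) = a i := congrFun hπ i
    rcases eq_or_ne (a i) 0 with h0 | h0
    · simp [hai, h0]
    · simp only [signedPerm, Equiv.coe_fn_mk, hs i h0, hai]
      split_ifs <;> ring
  rw [dotProduct, sum_congr rfl fun i _ => key i,
    Equiv.sum_comp π fun j => if s then a j - a j * x j else a j * x j]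
  cases s <;> simp [sum_sub_distrib, dotProduct]

theorem eq_one_of_forall_eq_mul_comp (ha : 0 ≤ a) (ha' : a ≠ 0) {r : ℝ}
    (h : ∀ i, a i = r * a (π i)) : r = 1 := by
  have hsum : ∑ i, a i = r * ∑ i, a i := by
    conv_lhs => rw [sum_congr rfl fun i _ => h i]
    rw [← mul_sum, Equiv.sum_comp π a]
  have hpos : 0 < ∑ i, a i := by
    obtain ⟨i₀, hi₀ : a i₀ ≠ 0⟩ := Function.ne_iff.1 ha'
    exact sum_pos' (fun i _ => ha i) ⟨i₀, mem_univ _, (ha i₀).lt_of_ne' hi₀⟩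
  nlinarith

theorem comp_eq_and_signs_of_forall_dotProduct_signedPerm (ha : 0 ≤ a) (ha' : a ≠ 0) {b : ℝ}
    (h : ∀ x, a ⬝ᵥ x = b → a ⬝ᵥ signedPerm π ε x = b) :
    a ∘ π = a ∧ ((∀ i, a i ≠ 0 → ε i = false) ∨
      (∑ i, a i = 2 * b ∧ ∀ i, a i ≠ 0 → ε i = true)) := by
  set w : ι → ℝ := fun i => if ε i then -a i else a i
  set e : ℝ := ∑ i, if ε i then a i else 0
  obtain ⟨l, hl, hd⟩ := exists_eq_smul_of_forall_dotProduct_eq_imp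
    (c := fun j => w (π.symm j)) (d := b - e) ha' fun x hx => by
      have := h x hx
      rw [dotProduct_signedPerm] at this
      rw [dotProduct, ← Equiv.sum_comp π]
      simp only [Equiv.symm_apply_apply]
      linarith
  have hw : ∀ i, w i = l * a (π i) := fun i => by simpa using congrFun hl (π i)
  have habs : ∀ i, a i = |l| * a (π i) := fun i => by
    have := congrArg abs (hw i)
    rwa [abs_mul, abs_of_nonneg (ha _), show |w i| = a i by
      simp only [w]; split_ifs <;> simp [abs_of_nonneg (ha i)]] at this
  have hl : |l| = 1 := eq_one_of_forall_eq_mul_comp ha ha' habs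
  have hπ : a ∘ π = a := funext fun i => by simpa [hl] using (habs i).symm
  refine ⟨hπ, ?_⟩
  have hwa : ∀ i, w i = l * a i := fun i => by rw [hw, ← congrFun hπ i]; rfl
  rcases (abs_eq zero_le_one).1 hl with rfl | rfl
  · refine Or.inl fun i hi => ?_
    by_contra hε
    rw [Bool.not_eq_false] at hε
    have := hwa i
    simp only [w, hε, if_true] at this
    exact hi (by linarith)
  · have hε : ∀ i, a i ≠ 0 → ε i = true := fun i hi => by
      by_contra hε
      rw [Bool.not_eq_true] at hε
      have := hwa i
      simp only [w, hε, Bool.false_eq_true, if_false] at this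
      exact hi (by linarith)
    refine Or.inr ⟨?_, hε⟩
    have he : e = ∑ i, a i := sum_congr rfl fun i _ => by
      rcases eq_or_ne (a i) 0 with h0 | h0
      · simp [h0]
      · simp [hε i h0]
    linarith

theorem signedPerm_image_hyperplane_eq_iff (ha : 0 ≤ a) (ha' : a ≠ 0) (b : ℝ) :
    signedPerm π ε '' {x | a ⬝ᵥ x = b} = {x | a ⬝ᵥ x = b} ↔
      a ∘ π = a ∧ ((∀ i, a i ≠ 0 → ε i = false) ∨
        (∑ i, a i = 2 * b ∧ ∀ i, a i ≠ 0 → ε i = true)) := by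
  rw [Equiv.image_eq_self_iff_preimage_eq_self]
  constructor
  · intro h
    refine comp_eq_and_signs_of_forall_dotProduct_signedPerm ha ha' fun x hx => ?_
    exact (h.symm ▸ hx : x ∈ signedPerm π ε ⁻¹' {x | a ⬝ᵥ x = b})
  · rintro ⟨hπ, hε | ⟨h2b, hε⟩⟩ <;> ext x <;>
      simp only [Set.mem_preimage, Set.mem_ofPred_eq, dotProduct_signedPerm_of_comp_eq hπ hε x]
    · simp
    · simp only [if_true, h2b]
      constructor <;> intro <;> linarith

variable [DecidableEq ι]

theorem ncard_comp_eq_self {β : Type*} [Zero β] [DecidableEq β] (a : ι → β) (S : Finset ι)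
    (hS : ∀ i, i ∈ S ↔ a i ≠ 0) :
    {π : Equiv.Perm ι | a ∘ π = a}.ncard =
      (#Sᶜ)! * ∏ v ∈ S.image a, (#{i ∈ S | a i = v})! := by
  have h0 : (0 : β) ∉ S.image a := by simp [hS]
  have hsub : univ.image a ⊆ insert 0 (S.image a) := fun v hv => by
    obtain ⟨i, -, rfl⟩ := mem_image.1 hv
    by_cases hi : a i = 0
    · simp [hi]
    · exact mem_insert_of_mem (mem_image_of_mem a ((hS i).2 hi))
  rw [← Nat.card_coe_set_eq, Set.coe_ofPred, Nat.card_eq_fintype_card,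
    DomMulAct.stabilizer_card', prod_subset hsub fun v _ hv => ?_, prod_insert h0]
  · congr 1
    · rw [Fintype.card_subtype]
      congr 2
      ext i
      simp [hS]
    · refine prod_congr rfl fun v hv => ?_
      rw [Fintype.card_subtype]
      congr 2
      ext i
      simp only [mem_filter, mem_univ, true_and, iff_and_self]
      rintro rfl
      exact (hS i).2 fun h => h0 (h ▸ hv)
  · have : IsEmpty {i // a i = v} := ⟨fun i => hv (i.2 ▸ mem_image_of_mem a (mem_univ i.1))⟩
    rw [Fintype.card_eq_zero, factorial_zero]

theorem ncard_setOf_forall_mem_eq (S : Finset ι) (s : Bool) :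
    {ε : ι → Bool | ∀ i ∈ S, ε i = s}.ncard = 2 ^ #Sᶜ := by
  have : {ε : ι → Bool | ∀ i ∈ S, ε i = s} =
      ↑(Fintype.piFinset fun i => if i ∈ S then {s} else univ) := by
    ext ε
    simp only [Set.mem_ofPred_eq, mem_coe, Fintype.mem_piFinset]
    refine forall_congr' fun i => ?_
    split_ifs with hi <;> simp [hi]
  rw [this, Set.ncard_coe_finset, Fintype.card_piFinset]
  simp [apply_ite card, prod_ite, filter_not, compl_eq_univ_sdiff]

theorem ncard_setOf_forall_mem_eq_false_or_eq_true (S : Finset ι) (hS : S.Nonempty)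
    (P : Prop) [Decidable P] :
    {ε : ι → Bool | (∀ i ∈ S, ε i = false) ∨ (P ∧ ∀ i ∈ S, ε i = true)}.ncard =
      2 ^ (#Sᶜ + if P then 1 else 0) := by
  by_cases hP : P
  · obtain ⟨i, hi⟩ := hS
    have hdisj : Disjoint {ε : ι → Bool | ∀ i ∈ S, ε i = false} {ε | ∀ i ∈ S, ε i = true} :=
      Set.disjoint_left.2 fun ε h₁ h₂ => by simpa [h₁ i hi] using h₂ i hi
    rw [show {ε : ι → Bool | (∀ i ∈ S, ε i = false) ∨ (P ∧ ∀ i ∈ S, ε i = true)} =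
        {ε | ∀ i ∈ S, ε i = false} ∪ {ε | ∀ i ∈ S, ε i = true} by simp [Set.ofPred_or, hP],
      Set.ncard_union_eq hdisj, ncard_setOf_forall_mem_eq, ncard_setOf_forall_mem_eq, if_pos hP,
      pow_succ, mul_two]
  · simp [hP, ncard_setOf_forall_mem_eq]

end

theorem stmt11_general (n t : ℕ) (ht : 1 ≤ t) (htn : t ≤ n)
    (a : Fin n → ℝ) (hpos : ∀ i : Fin n, (i : ℕ) < t → 0 < a i)
    (hzero : ∀ i : Fin n, t ≤ (i : ℕ) → a i = 0) (b : ℝ) :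
    {p : Equiv.Perm (Fin n) × (Fin n → Bool) |
        (fun x : Fin n → ℝ => fun i => if p.2 i then 1 - x (p.1 i) else x (p.1 i)) ''
          {x | ∑ i, a i * x i = b} = {x | ∑ i, a i * x i = b}}.ncard =
      Nat.factorial (n - t) *
        2 ^ (n - t + (if ∑ i, a i = 2 * b then 1 else 0)) *
        ∏ v ∈ (Finset.univ.filter fun i : Fin n => (i : ℕ) < t).image a,
          Nat.factorial
            (Finset.univ.filter fun i : Fin n => (i : ℕ) < t ∧ a i = v).card := by
  set S := univ.filter fun i : Fin n => (i : ℕ) < t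
  have hS : ∀ i, i ∈ S ↔ a i ≠ 0 := fun i => by
    simp only [S, mem_filter, mem_univ, true_and]
    exact ⟨fun h => (hpos i h).ne', fun h => not_le.1 (mt (hzero i) h)⟩
  have hS₀ : S.Nonempty := ⟨⟨0, by omega⟩, mem_filter.2 ⟨mem_univ _, ht⟩⟩
  have ha : 0 ≤ a := fun i =>
    (lt_or_ge (i : ℕ) t).elim (fun h => (hpos i h).le) fun h => (hzero i h).ge
  have ha' : a ≠ 0 := fun h => by
    obtain ⟨i, hi⟩ := hS₀
    exact (hS i).1 hi (congrFun h i)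
  have hSc : #Sᶜ = n - t := by
    rw [card_compl, Fintype.card_fin, Fin.card_filter_val_lt, min_eq_right htn]
  have hset : {p : Equiv.Perm (Fin n) × (Fin n → Bool) |
        (fun x : Fin n → ℝ => fun i => if p.2 i then 1 - x (p.1 i) else x (p.1 i)) ''
          {x | ∑ i, a i * x i = b} = {x | ∑ i, a i * x i = b}} =
      {π : Equiv.Perm (Fin n) | a ∘ π = a} ×ˢ {ε : Fin n → Bool | (∀ i ∈ S, ε i = false) ∨
        (∑ i, a i = 2 * b ∧ ∀ i ∈ S, ε i = true)} := by
    ext ⟨π, ε⟩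
    simp only [hS]
    exact signedPerm_image_hyperplane_eq_iff ha ha' b
  rw [hset, Set.ncard_prod, ncard_comp_eq_self a S hS,
    ncard_setOf_forall_mem_eq_false_or_eq_true S hS₀, hSc]
  simp only [S, filter_filter]
  ring

/-- Equation (6.8): `|F(H)| = (n-t)! 2^(n-t+δ(H)) ∏ α_i!` for a spanned
hyperplane `H : a₁x₁ + ⋯ + aₜxₜ = b` of type `α`. -/
theorem stmt11 (n t : ℕ) (hn : 1 ≤ n) (ht : 1 ≤ t) (htn : t ≤ n)
    (a : Fin n → ℝ) (hpos : ∀ i : Fin n, (i : ℕ) < t → 0 < a i)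
    (hzero : ∀ i : Fin n, t ≤ (i : ℕ) → a i = 0) (b : ℝ)
    (hspan : Module.finrank ℝ
      (affineSpan ℝ ({x : Fin n → ℝ | ∀ i, x i = 0 ∨ x i = 1} ∩
        {x | ∑ i, a i * x i = b})).direction = n - 1) :
    {p : Equiv.Perm (Fin n) × (Fin n → Bool) |
        (fun x : Fin n → ℝ => fun i => if p.2 i then 1 - x (p.1 i) else x (p.1 i)) ''
          {x | ∑ i, a i * x i = b} = {x | ∑ i, a i * x i = b}}.ncard =
      Nat.factorial (n - t) *
        2 ^ (n - t + (if ∑ i, a i = 2 * b then 1 else 0)) *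
        ∏ v ∈ (Finset.univ.filter fun i : Fin n => (i : ℕ) < t).image a,
          Nat.factorial
            (Finset.univ.filter fun i : Fin n => (i : ℕ) < t ∧ a i = v).card :=
  stmt11_general n t ht htn a hpos hzero b
end
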